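/- Let H(1,1,1;2,1,n−6) for n ≥ 7 be the bipartite graph with U1 = {u1}, U2 = {u2}, U3 = {u3}, and V1, V2, V3 with |V1| = 2, |V2| = 1, |V3| = n−6, where u1 is adjacent to all of V1 ∪ V2 ∪ V3, u2 is adjacent to V1 ∪ V2, and u3 is adjacent exactly to V1. Then the number of spanning trees of H(1,1,1;2,1,n−6) equals 36. -/

import Mathlib

/-!
Every vertex of `V₃` is a leaf hanging off `u₁`, so every spanning tree contains the pendant
edges, and deleting them is a bijection onto the spanning trees of the core `H(1,1,1;2,1,0)`,
which is `K₃,₃` minus an edge. Its inverse re-attaches the leaves; both maps are monotone and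
preserve connectedness, so minimal connected spanning subgraphs (trees) correspond. The core has
36 spanning trees, found by enumerating its 5-edge subsets.
-/

noncomputable def spanningTreeCount {V : Type*} (G : SimpleGraph V) : ℕ :=
  {H : G.Subgraph | H.IsSpanning ∧ H.coe.IsTree}.ncard

/-- The double nested graph `H(1,1,1; 2, 1, b)`: `u₁ = Sum.inl 0` is adjacent to all of
`V₁ ∪ V₂ ∪ V₃`, `u₂ = Sum.inl 1` is adjacent to `V₁ ∪ V₂`, and `u₃ = Sum.inl 2`
is adjacent exactly to `V₁`, where `|V₁| = 2`, `|V₂| = 1`, `|V₃| = b`. -/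
def DNH3 (b : ℕ) : SimpleGraph (Fin 3 ⊕ (Fin 2 ⊕ (Fin 1 ⊕ Fin b))) :=
  SimpleGraph.fromRel (fun x y =>
    (∃ v : Fin 2 ⊕ (Fin 1 ⊕ Fin b), x = Sum.inl 0 ∧ y = Sum.inr v) ∨
    (∃ v : Fin 2, x = Sum.inl 1 ∧ y = Sum.inr (Sum.inl v)) ∨
    (∃ v : Fin 1, x = Sum.inl 1 ∧ y = Sum.inr (Sum.inr (Sum.inl v))) ∨
    (∃ v : Fin 2, x = Sum.inl 2 ∧ y = Sum.inr (Sum.inl v)))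

open Finset

namespace SimpleGraph

variable {V W : Type*} {G T : SimpleGraph V}

theorem spanningTreeCount_eq_ncard (G : SimpleGraph V) :
    spanningTreeCount G = {T : SimpleGraph V | T ≤ G ∧ T.IsTree}.ncard := by
  refine Set.ncard_congr (fun H _ ↦ H.spanningCoe) ?_ ?_ ?_
  · rintro H ⟨hsp, htree⟩
    exact ⟨H.spanningCoe_le, (H.spanningCoeEquivCoeOfSpanning hsp).isTree_iff.2 htree⟩
  · rintro H H' ⟨hsp, -⟩ ⟨hsp', -⟩ h
    exact Subgraph.ext (hsp.verts_eq_univ.trans hsp'.verts_eq_univ.symm)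
      (Subgraph.spanningCoe_inj.1 h)
  · rintro T ⟨hle, htree⟩
    have hsp := toSubgraph.isSpanning T hle
    exact ⟨toSubgraph T hle,
      ⟨hsp, (Subgraph.spanningCoeEquivCoeOfSpanning _ hsp).isTree_iff.1 htree⟩, rfl⟩

theorem ncard_isTree_le_eq_card_filter [Fintype V] [DecidableEq V] [DecidableRel G.Adj] (v : V) :
    {T : SimpleGraph V | T ≤ G ∧ T.IsTree}.ncard =
      #{s ∈ G.edgeFinset.powerset |
        #s + 1 = Fintype.card V ∧ ∀ w, (fromEdgeSet (s : Set (Sym2 V))).Reachable v w} := by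
  have hedges : ∀ s ∈ G.edgeFinset.powerset, (fromEdgeSet (s : Set (Sym2 V))).edgeSet = s := by
    intro s hs
    rw [edgeSet_fromEdgeSet, sdiff_eq_left, Set.disjoint_left]
    exact fun e he ↦ G.not_isDiag_of_mem_edgeSet (by simpa using (mem_powerset.1 hs) he)
  rw [← Set.ncard_coe_finset]
  symm
  refine Set.ncard_congr (fun s _ ↦ fromEdgeSet (s : Set (Sym2 V))) ?_ ?_ ?_
  · intro s hs
    obtain ⟨hsub, hcard, hreach⟩ := mem_filter.1 hs
    refine ⟨(fromEdgeSet_le G).2 ?_, isTree_iff_connected_and_card.2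
      ⟨(connected_iff_exists_forall_reachable _).2 ⟨v, hreach⟩, ?_⟩⟩
    · exact fun e he ↦ by simpa using mem_powerset.1 hsub he.1
    · rw [hedges s hsub, Nat.card_coe_set_eq, Set.ncard_coe_finset, hcard,
        Nat.card_eq_fintype_card]
  · intro s t hs ht hst
    have := congrArg edgeSet hst
    rwa [hedges s (mem_filter.1 hs).1, hedges t (mem_filter.1 ht).1, coe_inj] at this
  · rintro T ⟨hle, hT⟩
    classical
    refine ⟨T.edgeFinset, mem_filter.2 ⟨mem_powerset.2 (edgeFinset_subset_edgeFinset.2 hle),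
      hT.card_edgeFinset, fun w ↦ ?_⟩, ?_⟩
    · simpa using hT.connected.preconnected v w
    · simp

theorem Connected.adj_of_neighborSet_eq_singleton (hT : T.Connected) (hle : T ≤ G) {x u : V}
    (hx : G.neighborSet x = {u}) : T.Adj x u := by
  have hxu : x ≠ u := (show u ∈ G.neighborSet x from hx ▸ Set.mem_singleton u).ne
  obtain ⟨p⟩ := hT.preconnected x u
  have hp : ¬p.Nil := Walk.not_nil_of_ne hxu
  have hsnd : p.snd ∈ G.neighborSet x := hle (p.adj_snd hp)
  rw [hx, Set.mem_singleton_iff] at hsnd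
  exact hsnd ▸ p.adj_snd hp

section Leaves

variable (G) (f : W ↪ V)

def edgesOffRange : SimpleGraph V := G ⊓ fromRel fun x _ ↦ x ∉ Set.range f

variable {G f}

theorem edgesOffRange_adj {x y : V} :
    (edgesOffRange G f).Adj x y ↔ G.Adj x y ∧ (x ∉ Set.range f ∨ y ∉ Set.range f) := by
  simp only [edgesOffRange, inf_adj, fromRel_adj]
  exact ⟨fun h ↦ ⟨h.1, h.2.2⟩, fun h ↦ ⟨h.1, h.1.ne, h.2⟩⟩

theorem comap_map_sup_edgesOffRange (T' : SimpleGraph W) :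
    (T'.map f ⊔ edgesOffRange G f).comap f = T' := by
  ext a b
  simp [edgesOffRange_adj]

theorem map_comap_sup_edgesOffRange (hle : T ≤ G) (hoff : edgesOffRange G f ≤ T) :
    (T.comap f).map f ⊔ edgesOffRange G f = T := by
  refine le_antisymm (sup_le (map_comap_le f T) hoff) fun x y h ↦ ?_
  by_cases hxy : x ∈ Set.range f ∧ y ∈ Set.range f
  · obtain ⟨⟨a, rfl⟩, ⟨b, rfl⟩⟩ := hxy
    exact Or.inl (map_adj_apply.2 h)
  · exact Or.inr (edgesOffRange_adj.2 ⟨hle h, not_and_or.1 hxy⟩)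

theorem edgesOffRange_le (hf : ∀ x ∉ Set.range f, ∃ w, G.neighborSet x = {f w})
    (hT : T.Connected) (hle : T ≤ G) : edgesOffRange G f ≤ T := by
  have adj_of_notMem_range : ∀ x y, G.Adj x y → x ∉ Set.range f → T.Adj x y := by
    intro x y hxy hx
    obtain ⟨w, hw⟩ := hf x hx
    have hy : y = f w := by simpa [hw] using (show y ∈ G.neighborSet x from hxy)
    exact hy ▸ hT.adj_of_neighborSet_eq_singleton hle hw
  intro x y h
  obtain ⟨hxy, hx | hy⟩ := edgesOffRange_adj.1 h
  · exact adj_of_notMem_range x y hxy hx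
  · exact (adj_of_notMem_range y x hxy.symm hy).symm

theorem Connected.comap_of_leaves (hf : ∀ x ∉ Set.range f, ∃ w, G.neighborSet x = {f w})
    (hT : T.Connected) (hle : T ≤ G) : (T.comap f).Connected := by
  have : Nonempty W := by
    obtain ⟨x⟩ := hT.nonempty
    by_cases hx : x ∈ Set.range f
    · exact ⟨hx.choose⟩
    · exact ⟨(hf x hx).choose⟩
  have hleaf : ∀ x ∉ Set.range f, (T.neighborSet x).Subsingleton := fun x hx ↦ by
    obtain ⟨w, hw⟩ := hf x hx
    exact (Set.subsingleton_singleton (a := f w)).anti (hw ▸ fun _ h ↦ hle h)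
  exact ⟨(Embedding.comap f T).isoInduceRange.symm.preconnected_iff.1
    (hT.preconnected.induce_of_degree_eq_one hleaf)⟩

theorem Connected.map_sup_edgesOffRange (hf : ∀ x ∉ Set.range f, ∃ w, G.neighborSet x = {f w})
    {T' : SimpleGraph W} (hT' : T'.Connected) : (T'.map f ⊔ edgesOffRange G f).Connected := by
  obtain ⟨w₀⟩ := hT'.nonempty
  have hcore : ∀ w, (T'.map f ⊔ edgesOffRange G f).Reachable (f w₀) (f w) := fun w ↦
    ((hT'.preconnected w₀ w).map (Embedding.map f T').toHom).mono le_sup_left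
  refine (connected_iff_exists_forall_reachable _).2 ⟨f w₀, fun x ↦ ?_⟩
  by_cases hx : x ∈ Set.range f
  · obtain ⟨w, rfl⟩ := hx
    exact hcore w
  · obtain ⟨w, hw⟩ := hf x hx
    have hxw : G.Adj x (f w) := by simp [← mem_neighborSet, hw]
    exact (hcore w).trans (Adj.reachable (Or.inr (edgesOffRange_adj.2 ⟨hxw.symm, Or.inr hx⟩)))

theorem IsTree.comap_of_leaves (hf : ∀ x ∉ Set.range f, ∃ w, G.neighborSet x = {f w})
    (hT : T.IsTree) (hle : T ≤ G) : (T.comap f).IsTree :=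
  ⟨hT.connected.comap_of_leaves hf hle, hT.isAcyclic.of_comap f⟩

theorem IsTree.map_sup_edgesOffRange (hf : ∀ x ∉ Set.range f, ∃ w, G.neighborSet x = {f w})
    {T' : SimpleGraph W} (hT' : T'.IsTree) (hle : T' ≤ G.comap f) :
    (T'.map f ⊔ edgesOffRange G f).IsTree := by
  rw [isTree_iff_minimal_connected] at hT' ⊢
  refine ⟨hT'.prop.map_sup_edgesOffRange hf, fun S hS hSle ↦ ?_⟩
  have hSG : S ≤ G := hSle.trans (sup_le ((map_le_iff_le_comap f T' G).2 hle) inf_le_left)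
  have hcomap : T' ≤ S.comap f := hT'.2 (hS.comap_of_leaves hf hSG)
    (by simpa only [comap_map_sup_edgesOffRange] using comap_monotone f hSle)
  rw [← map_comap_sup_edgesOffRange hSG (edgesOffRange_le hf hS hSG)]
  exact sup_le_sup_right (map_monotone f hcomap) _

theorem spanningTreeCount_comap_of_leaves
    (hf : ∀ x ∉ Set.range f, ∃ w, G.neighborSet x = {f w}) :
    spanningTreeCount (G.comap f) = spanningTreeCount G := by
  rw [spanningTreeCount_eq_ncard, spanningTreeCount_eq_ncard]
  symm
  refine Set.ncard_congr (fun T _ ↦ T.comap f) ?_ ?_ ?_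
  · rintro T ⟨hle, hT⟩
    exact ⟨comap_monotone f hle, hT.comap_of_leaves hf hle⟩
  · rintro T₁ T₂ ⟨hle₁, hT₁⟩ ⟨hle₂, hT₂⟩ h
    rw [← map_comap_sup_edgesOffRange hle₁ (edgesOffRange_le hf hT₁.connected hle₁),
      ← map_comap_sup_edgesOffRange hle₂ (edgesOffRange_le hf hT₂.connected hle₂), h]
  · rintro T' ⟨hle, hT'⟩
    refine ⟨T'.map f ⊔ edgesOffRange G f, ⟨?_, hT'.map_sup_edgesOffRange hf hle⟩,
      comap_map_sup_edgesOffRange T'⟩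
    exact sup_le ((map_le_iff_le_comap f T' G).2 hle) inf_le_left

end Leaves

end SimpleGraph

open SimpleGraph

set_option synthInstance.maxSize 1000 in
instance (b : ℕ) : DecidableRel (DNH3 b).Adj := fun x y ↦
  decidable_of_iff' _ (fromRel_adj _ x y)

namespace DNH3

def coreEmbedding (b : ℕ) :
    Fin 3 ⊕ (Fin 2 ⊕ (Fin 1 ⊕ Fin 0)) ↪ Fin 3 ⊕ (Fin 2 ⊕ (Fin 1 ⊕ Fin b)) :=
  .sumMap (.refl _) (.sumMap (.refl _) (.sumMap (.refl _) (Fin.castLEEmb b.zero_le)))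

theorem comap_coreEmbedding (b : ℕ) : (DNH3 b).comap (coreEmbedding b) = DNH3 0 := by
  ext x y
  rcases x with x | x | x | ⟨_, ⟨⟩⟩ <;> rcases y with y | y | y | ⟨_, ⟨⟩⟩ <;>
    simp [DNH3, coreEmbedding]

theorem neighborSet_inr_inr_inr {b : ℕ} (j : Fin b) :
    (DNH3 b).neighborSet (.inr (.inr (.inr j))) = {.inl 0} := by
  ext x
  simp only [mem_neighborSet, DNH3, fromRel_adj, Set.mem_singleton_iff]
  aesop

theorem neighborSet_eq_singleton_of_notMem_range (b : ℕ) :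
    ∀ x ∉ Set.range (coreEmbedding b), ∃ w, (DNH3 b).neighborSet x = {coreEmbedding b w} := by
  rintro (x | x | x | j) hx
  · exact absurd ⟨.inl x, rfl⟩ hx
  · exact absurd ⟨.inr (.inl x), rfl⟩ hx
  · exact absurd ⟨.inr (.inr (.inl x)), rfl⟩ hx
  · exact ⟨.inl 0, neighborSet_inr_inr_inr j⟩

theorem spanningTreeCount_zero : spanningTreeCount (DNH3 0) = 36 := by
  rw [spanningTreeCount_eq_ncard, ncard_isTree_le_eq_card_filter (.inl 0)]
  decide +kernel

end DNH3

theorem spanningTreeCount_DNH3_tricyclic_general (n : ℕ) :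
    spanningTreeCount (DNH3 (n - 6)) = 36 := by
  rw [← spanningTreeCount_comap_of_leaves (DNH3.neighborSet_eq_singleton_of_notMem_range _),
    DNH3.comap_coreEmbedding, DNH3.spanningTreeCount_zero]

/-- The double nested tricyclic graph `H(1,1,1; 2, 1, n-6)`, `n ≥ 7`, has exactly 36
spanning trees. -/
theorem spanningTreeCount_DNH3_tricyclic (n : ℕ) (hn : 7 ≤ n) :
    spanningTreeCount (DNH3 (n - 6)) = 36 :=
  spanningTreeCount_DNH3_tricyclic_general n
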